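/- Let $C$ be an object of a triangulated K3 category and $E$ a spherical object with $T_E(C) \cong C[-1]$ (e.g. $C \in \langle E \rangle$), and $N$ any object. Then $2\, i(C, N) \geq i(E, C)\, i(E, N)$, where $i(X,Y) = \sum_j \dim\operatorname{Hom}(X, Y[j])$. -/

import Mathlib

open CategoryTheory Limits Pretriangulated Module

variable (k : Type*) [Field k] (C : Type*) [Category C] [Preadditive C] [Linear k C]
  [HasZeroObject C] [HasShift C ℤ] [∀ n : ℤ, (shiftFunctor C n).Additive]
  [Pretriangulated C] [HasFiniteBiproducts C]

/-- A spherical object: `Hom(E, E[i])` is one-dimensional for `i = 0, 2` and zero otherwise. -/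
def IsSpherical (E : C) : Prop :=
  finrank k (E ⟶ E⟦(0 : ℤ)⟧) = 1 ∧ finrank k (E ⟶ E⟦(2 : ℤ)⟧) = 1 ∧
    ∀ i : ℤ, i ≠ 0 → i ≠ 2 → ∀ φ : E ⟶ E⟦i⟧, φ = 0

/-- The object `⊕ᵢ Hom(E, M[i]) ⊗ E[-i]`, realised as a finite biproduct of shifted
copies of `E`, where `s` is a finite set containing the support of `i ↦ Hom(E, M[i])`. -/
noncomputable def twistSrc (E M : C) (s : Finset ℤ) : C :=
  ⨁ fun p : Σ j : s, Fin (finrank k (E ⟶ M⟦(j : ℤ)⟧)) => E⟦(-(p.1 : ℤ))⟧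

/-- The intersection index `i(M, N) = ∑ⱼ dim Hom(M, N[j])`. -/
noncomputable def interIdx (M N : C) : ℕ :=
  ∑ᶠ j : ℤ, finrank k (M ⟶ N⟦j⟧)

/-! The twist triangle `⊕ⱼ Hom(E, X[j]) ⊗ E[-j] → X → T(X)`, rotated to
`T(X)[-1] → ⊕ⱼ Hom(E, X[j]) ⊗ E[-j] → X`, gives the long exact sequence of `Hom(-, N[m])`,
so `i(-, N)` is subadditive on it. The index of the biproduct is `i(E, X) · i(E, N)`, because
`i(-, N)` is additive on biproducts and insensitive to shifts, and `T(X)[-1] ≅ X[-2]` has the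
same index as `X`. -/

theorem finrank_le_finrank_add_finrank_of_ker_le_range {K U V W : Type*} [DivisionRing K]
    [AddCommGroup U] [Module K U] [AddCommGroup V] [Module K V] [AddCommGroup W] [Module K W]
    [FiniteDimensional K U] [FiniteDimensional K V] [FiniteDimensional K W]
    {u : U →ₗ[K] V} {v : V →ₗ[K] W} (h : LinearMap.ker v ≤ LinearMap.range u) :
    finrank K V ≤ finrank K U + finrank K W := by
  calc finrank K V = finrank K (LinearMap.range v) + finrank K (LinearMap.ker v) :=
        (v.finrank_range_add_finrank_ker).symm
    _ ≤ finrank K W + finrank K (LinearMap.range u) :=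
        add_le_add (Submodule.finrank_le _) (Submodule.finrank_mono h)
    _ ≤ finrank K W + finrank K U := by gcongr; exact u.finrank_range_le
    _ = finrank K U + finrank K W := add_comm _ _

theorem finrank_hom_obj₂_le_add {k : Type*} [Field k]
    {C : Type*} [Category C] [Preadditive C] [Linear k C] [HasZeroObject C] [HasShift C ℤ]
    [∀ n : ℤ, (shiftFunctor C n).Additive] [Pretriangulated C]
    [∀ X Y : C, FiniteDimensional k (X ⟶ Y)] (T : Triangle C) (hT : T ∈ distTriang C) (Z : C) :
    finrank k (T.obj₂ ⟶ Z) ≤ finrank k (T.obj₃ ⟶ Z) + finrank k (T.obj₁ ⟶ Z) :=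
  finrank_le_finrank_add_finrank_of_ker_le_range
    (u := Linear.leftComp k Z T.mor₂) (v := Linear.leftComp k Z T.mor₁) fun f hf => by
      obtain ⟨g, hg⟩ := T.yoneda_exact₂ hT f hf
      exact ⟨g, hg.symm⟩

/-- The shift functor is not assumed `k`-linear, so a shift is moved across `Hom` by Serre
duality instead: there it only changes the target up to isomorphism. -/
theorem finrank_shift_hom_shift_of_serre {k : Type*} [Field k] {C : Type*} [Category C]
    [Preadditive C] [Linear k C] [HasShift C ℤ]
    (hSerre : ∀ (X Y : C) (i : ℤ), finrank k (X ⟶ Y⟦i⟧) = finrank k (Y ⟶ X⟦2 - i⟧))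
    (A B : C) (a m : ℤ) :
    finrank k (A⟦a⟧ ⟶ B⟦m⟧) = finrank k (A ⟶ B⟦m - a⟧) := by
  rw [hSerre, hSerre A B (m - a), show (2 : ℤ) - (m - a) = a + (2 - m) by ring]
  exact LinearEquiv.finrank_eq
    (Linear.homCongr k (Iso.refl B) ((shiftFunctorAdd C a (2 - m)).symm.app A))

noncomputable def CategoryTheory.Limits.biproduct.homLinearEquiv {k : Type*} [Semiring k]
    {C : Type*} [Category C] [Preadditive C] [Linear k C] {ι : Type} [Finite ι]
    (f : ι → C) [HasBiproduct f] (Z : C) : ((⨁ f) ⟶ Z) ≃ₗ[k] ∀ i, (f i ⟶ Z) where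
  toFun g i := biproduct.ι f i ≫ g
  map_add' g h := by funext i; simp
  map_smul' c g := by funext i; simp
  invFun h := biproduct.desc h
  left_inv g := by apply biproduct.hom_ext'; intro i; simp
  right_inv h := by funext i; simp

theorem interIdx_congr_left {k : Type*} [Field k] {C : Type*} [Category C] [Preadditive C]
    [Linear k C] [HasShift C ℤ] {A A' : C} (e : A ≅ A') (B : C) :
    interIdx k C A B = interIdx k C A' B := by
  simp only [interIdx, (Linear.homCongr k e (Iso.refl _)).finrank_eq]

theorem interIdx_shift_left {k : Type*} [Field k] {C : Type*} [Category C] [Preadditive C]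
    [Linear k C] [HasShift C ℤ]
    (hSerre : ∀ (X Y : C) (i : ℤ), finrank k (X ⟶ Y⟦i⟧) = finrank k (Y ⟶ X⟦2 - i⟧))
    (A B : C) (a : ℤ) : interIdx k C (A⟦a⟧) B = interIdx k C A B := by
  simp only [interIdx, finrank_shift_hom_shift_of_serre hSerre]
  exact finsum_comp_equiv (Equiv.subRight a) (f := fun j => finrank k (A ⟶ B⟦j⟧))

theorem interIdx_obj₂_le {k : Type*} [Field k] {C : Type*} [Category C] [Preadditive C]
    [Linear k C] [HasZeroObject C] [HasShift C ℤ] [∀ n : ℤ, (shiftFunctor C n).Additive]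
    [Pretriangulated C] [∀ X Y : C, FiniteDimensional k (X ⟶ Y)]
    (hfin : ∀ X Y : C, (Function.support fun j : ℤ => finrank k (X ⟶ Y⟦j⟧)).Finite)
    (T : Triangle C) (hT : T ∈ distTriang C) (Z : C) :
    interIdx k C T.obj₂ Z ≤ interIdx k C T.obj₃ Z + interIdx k C T.obj₁ Z := by
  rw [interIdx, interIdx, interIdx, ← finsum_add_distrib (hfin _ _) (hfin _ _)]
  exact finsum_le_finsum' (hfin _ _) ((hfin _ _).union (hfin _ _) |>.subset
    (Function.support_add _ _)) fun j => finrank_hom_obj₂_le_add T hT _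

theorem interIdx_biproduct_left {k : Type*} [Field k] {C : Type*} [Category C] [Preadditive C]
    [Linear k C] [HasShift C ℤ] [∀ X Y : C, FiniteDimensional k (X ⟶ Y)]
    (hfin : ∀ X Y : C, (Function.support fun j : ℤ => finrank k (X ⟶ Y⟦j⟧)).Finite)
    {ι : Type} [Fintype ι] (f : ι → C) [HasBiproduct f] (Z : C) :
    interIdx k C (⨁ f) Z = ∑ i, interIdx k C (f i) Z := by
  simp only [interIdx, (biproduct.homLinearEquiv (k := k) f _).finrank_eq,
    Module.finrank_pi_fintype]
  exact finsum_sum_comm _ _ fun i _ => hfin _ _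

theorem interIdx_twistSrc {k : Type*} [Field k] {C : Type*} [Category C] [Preadditive C]
    [Linear k C] [HasShift C ℤ] [HasFiniteBiproducts C] [∀ X Y : C, FiniteDimensional k (X ⟶ Y)]
    (hfin : ∀ X Y : C, (Function.support fun j : ℤ => finrank k (X ⟶ Y⟦j⟧)).Finite)
    (hSerre : ∀ (X Y : C) (i : ℤ), finrank k (X ⟶ Y⟦i⟧) = finrank k (Y ⟶ X⟦2 - i⟧))
    {E X : C} {s : Finset ℤ} (hs : ∀ j ∉ s, ∀ φ : E ⟶ X⟦j⟧, φ = 0) (N : C) :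
    interIdx k C (twistSrc k C E X s) N = interIdx k C E X * interIdx k C E N := by
  have hEX : interIdx k C E X = ∑ j ∈ s, finrank k (E ⟶ X⟦j⟧) := by
    refine finsum_eq_sum_of_support_subset _ fun j hj => ?_
    by_contra hjs
    have : Subsingleton (E ⟶ X⟦j⟧) := ⟨fun φ ψ => (hs j hjs φ).trans (hs j hjs ψ).symm⟩
    exact hj finrank_zero_of_subsingleton
  rw [twistSrc, interIdx_biproduct_left hfin]
  simp only [interIdx_shift_left hSerre, Finset.sum_const, Finset.card_univ, Fintype.card_sigma,
    Fintype.card_fin, smul_eq_mul, hEX]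
  rw [Finset.sum_coe_sort s fun j => finrank k (E ⟶ X⟦j⟧)]

theorem stmt_14 {k : Type*} [Field k] {C : Type*} [Category C] [Preadditive C] [Linear k C]
    [HasZeroObject C] [HasShift C ℤ] [∀ n : ℤ, (shiftFunctor C n).Additive]
    [Pretriangulated C] [HasFiniteBiproducts C] [∀ X Y : C, FiniteDimensional k (X ⟶ Y)]
    -- finite type: graded Homs vanish for almost all degrees
    (hfin : ∀ X Y : C, (Function.support fun j : ℤ => finrank k (X ⟶ Y⟦j⟧)).Finite)
    -- K3 category: Serre duality `Hom(X, Y[i]) ≅ Hom(Y, X[2 - i])^*`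
    (hSerre : ∀ (X Y : C) (i : ℤ), finrank k (X ⟶ Y⟦i⟧) = finrank k (Y ⟶ X⟦2 - i⟧))
    (E : C) (hE : IsSpherical k C E)
    (T : C ⥤ C) [T.CommShift ℤ] [T.IsTriangulated]
    (X N : C)
    -- the defining triangle of the twist at `X`
    (s : Finset ℤ) (hs : ∀ j ∉ s, ∀ φ : E ⟶ X⟦j⟧, φ = 0)
    (ev : twistSrc k C E X s ⟶ X) (g : X ⟶ T.obj X)
    (δ : T.obj X ⟶ (twistSrc k C E X s)⟦(1 : ℤ)⟧)
    (hdist : Triangle.mk ev g δ ∈ distTriang C)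
    (hev : ∀ j : ℤ, Function.Surjective
      fun φ : E ⟶ (twistSrc k C E X s)⟦j⟧ => φ ≫ (shiftFunctor C j).map ev)
    -- `T(X) ≅ X[-1]` (e.g. because `X` lies in the subcategory generated by `E`)
    (hiso : Nonempty (T.obj X ≅ X⟦(-1 : ℤ)⟧)) :
    interIdx k C E X * interIdx k C E N ≤ 2 * interIdx k C X N := by
  obtain ⟨e⟩ := hiso
  calc interIdx k C E X * interIdx k C E N = interIdx k C (twistSrc k C E X s) N :=
        (interIdx_twistSrc hfin hSerre hs N).symm
    _ ≤ interIdx k C X N + interIdx k C ((T.obj X)⟦(-1 : ℤ)⟧) N :=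
        interIdx_obj₂_le hfin _ (inv_rot_of_distTriang _ hdist) N
    _ = 2 * interIdx k C X N := by
        rw [interIdx_shift_left hSerre, interIdx_congr_left e, interIdx_shift_left hSerre, two_mul]
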